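/- Fix d ≥ 1 and r > 0, and work in ℝ^d with the Euclidean norm. Let mean(x) = (1/d)Σ_{i=1}^{d} x_i, c(x) = x − mean(x)·𝟙 where 𝟙 is the all-ones vector, and LN(x) = √d · c(x)/‖c(x)‖₂. Then for all x, y ∈ ℝ^d with ‖c(x)‖₂ ≥ r and ‖c(y)‖₂ ≥ r, ‖LN(x) − LN(y)‖₂ ≤ (2√d / r)·‖x − y‖₂. -/

import Mathlib

/-- The mean of the coordinates of `x ∈ ℝ^d`. -/
noncomputable def vecMean {d : ℕ} (x : EuclideanSpace ℝ (Fin d)) : ℝ :=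
  (1 / (d : ℝ)) * ∑ i, x i

/-- The all-ones vector `𝟙 ∈ ℝ^d`. -/
def allOnes (d : ℕ) : EuclideanSpace ℝ (Fin d) := WithLp.toLp 2 (fun _ => 1)

/-- The centering map `c(x) = x - mean(x) · 𝟙`. -/
noncomputable def centering {d : ℕ} (x : EuclideanSpace ℝ (Fin d)) : EuclideanSpace ℝ (Fin d) :=
  x - vecMean x • allOnes d

/-- Layer normalization: `LN(x) = √d · c(x) / ‖c(x)‖₂`. -/
noncomputable def layerNorm {d : ℕ} (x : EuclideanSpace ℝ (Fin d)) : EuclideanSpace ℝ (Fin d) :=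
  (Real.sqrt d * ‖centering x‖⁻¹) • centering x

/-!
Centering is the orthogonal projection onto the hyperplane `𝟙ᗮ`, so it is `1`-Lipschitz.
Splitting `u/‖u‖ - v/‖v‖ = (u - v)/‖u‖ + (1/‖u‖ - 1/‖v‖) v` and using `|‖u‖ - ‖v‖| ≤ ‖u - v‖`
on the second term gives `‖u/‖u‖ - v/‖v‖‖ ≤ 2‖u - v‖/‖u‖`; scaling by `√d` finishes.
-/

theorem norm_inv_norm_smul_sub_inv_norm_smul_le {E : Type*} [NormedAddCommGroup E]
    [NormedSpace ℝ E] {u : E} (hu : u ≠ 0) (v : E) :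
    ‖‖u‖⁻¹ • u - ‖v‖⁻¹ • v‖ ≤ 2 * ‖u - v‖ / ‖u‖ := by
  have hu' : 0 < ‖u‖ := norm_pos_iff.mpr hu
  have h_split : ‖u‖⁻¹ • u - ‖v‖⁻¹ • v = ‖u‖⁻¹ • (u - v) + (‖u‖⁻¹ - ‖v‖⁻¹) • v := by
    rw [smul_sub, sub_smul]; abel
  have h_radial : ‖(‖u‖⁻¹ - ‖v‖⁻¹) • v‖ ≤ ‖u - v‖ / ‖u‖ := by
    rcases eq_or_ne v 0 with rfl | hv
    · simp only [smul_zero, norm_zero]; positivity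
    have hv' : 0 < ‖v‖ := norm_pos_iff.mpr hv
    calc ‖(‖u‖⁻¹ - ‖v‖⁻¹) • v‖ = |‖u‖ - ‖v‖| / ‖u‖ := by
          rw [norm_smul, Real.norm_eq_abs, inv_sub_inv hu'.ne' hv'.ne', abs_div,
            abs_of_pos (mul_pos hu' hv'), abs_sub_comm]
          field_simp
      _ ≤ ‖u - v‖ / ‖u‖ := by gcongr; exact abs_norm_sub_norm_le u v
  calc ‖‖u‖⁻¹ • u - ‖v‖⁻¹ • v‖
      ≤ ‖‖u‖⁻¹ • (u - v)‖ + ‖(‖u‖⁻¹ - ‖v‖⁻¹) • v‖ := h_split ▸ norm_add_le _ _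
    _ ≤ ‖u - v‖ / ‖u‖ + ‖u - v‖ / ‖u‖ := by
          gcongr
          rw [norm_smul, norm_inv, norm_norm, inv_mul_eq_div]
    _ = 2 * ‖u - v‖ / ‖u‖ := by ring

theorem inner_allOnes (d : ℕ) (x : EuclideanSpace ℝ (Fin d)) :
    inner ℝ (allOnes d) x = ∑ i, x i := by
  simp [allOnes, PiLp.inner_apply]

theorem norm_allOnes_sq (d : ℕ) : ‖allOnes d‖ ^ 2 = d := by
  simp [allOnes, EuclideanSpace.norm_sq_eq]

theorem centering_eq_starProjection {d : ℕ} (x : EuclideanSpace ℝ (Fin d)) :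
    centering x = (ℝ ∙ allOnes d)ᗮ.starProjection x := by
  rw [Submodule.starProjection_orthogonal_val, Submodule.starProjection_singleton,
    inner_allOnes, norm_allOnes_sq, centering, vecMean, one_div_mul_eq_div, RCLike.ofReal_real_eq_id, id]

theorem norm_centering_sub_centering_le {d : ℕ} (x y : EuclideanSpace ℝ (Fin d)) :
    ‖centering x - centering y‖ ≤ ‖x - y‖ := by
  simp only [centering_eq_starProjection, ← map_sub]
  exact Submodule.norm_starProjection_apply_le _ _

theorem layerNorm_sub_layerNorm {d : ℕ} (x y : EuclideanSpace ℝ (Fin d)) :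
    layerNorm x - layerNorm y =
      √d • (‖centering x‖⁻¹ • centering x - ‖centering y‖⁻¹ • centering y) := by
  simp only [layerNorm, smul_sub, mul_smul]

theorem layerNorm_lipschitz_general (d : ℕ) (r : ℝ) (hr : 0 < r)
    (x y : EuclideanSpace ℝ (Fin d))
    (hx : r ≤ ‖centering x‖) :
    ‖layerNorm x - layerNorm y‖ ≤ (2 * Real.sqrt d / r) * ‖x - y‖ := by
  have hcx : centering x ≠ 0 := norm_pos_iff.mp (hr.trans_le hx)
  rw [layerNorm_sub_layerNorm, norm_smul, Real.norm_of_nonneg (Real.sqrt_nonneg d)]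
  calc √d * ‖‖centering x‖⁻¹ • centering x - ‖centering y‖⁻¹ • centering y‖
      ≤ √d * (2 * ‖centering x - centering y‖ / ‖centering x‖) := by
        gcongr; exact norm_inv_norm_smul_sub_inv_norm_smul_le hcx _
    _ ≤ √d * (2 * ‖x - y‖ / r) := by
        gcongr; exact norm_centering_sub_centering_le x y
    _ = (2 * √d / r) * ‖x - y‖ := by ring

/-- For `d ≥ 1`, `r > 0`, and any `x, y ∈ ℝ^d` with `‖c(x)‖₂ ≥ r` and
`‖c(y)‖₂ ≥ r`, layer normalization satisfies `‖LN(x) - LN(y)‖₂ ≤ (2√d / r) · ‖x - y‖₂`. -/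
theorem layerNorm_lipschitz (d : ℕ) (hd : 1 ≤ d) (r : ℝ) (hr : 0 < r)
    (x y : EuclideanSpace ℝ (Fin d))
    (hx : r ≤ ‖centering x‖) (hy : r ≤ ‖centering y‖) :
    ‖layerNorm x - layerNorm y‖ ≤ (2 * Real.sqrt d / r) * ‖x - y‖ :=
  layerNorm_lipschitz_general d r hr x y hx
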